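/- Let ℒ = {l₁, l₂, …, l_s} be a set of s nonnegative integers. Suppose A₁, A₂, …, A_m and B₁, B₂, …, B_m are subsets of [n] such that: (i) |Aᵢ ∩ Bⱼ| ∈ ℒ for every pair i < j, and (ii) |Aᵢ ∩ Bᵢ| ∉ ℒ for every 1 ≤ i ≤ m. Then m ≤ C(n, s) + C(n, s−1) + … + C(n, 0). -/
import Mathlib

open Finset

namespace Stmt18Aux

variable {n : ℕ}

/-- indicator function of containing `T`. -/
noncomputable def e (T : Finset (Fin n)) : Finset (Fin n) → ℝ :=
  fun S => if T ⊆ S then 1 else 0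

lemma e_mul (T U : Finset (Fin n)) : e T * e U = e (T ∪ U) := by
  funext S
  simp only [e, Pi.mul_apply, Finset.union_subset_iff]
  by_cases h1 : T ⊆ S <;> by_cases h2 : U ⊆ S <;> simp [h1, h2]

/-- the span of indicators of sets of size ≤ k -/
noncomputable def V (k : ℕ) : Submodule ℝ (Finset (Fin n) → ℝ) :=
  Submodule.span ℝ (e '' {T : Finset (Fin n) | T.card ≤ k})

noncomputable def hfun (A : Finset (Fin n)) (l : ℕ) : Finset (Fin n) → ℝ :=
  fun S => ((A ∩ S).card : ℝ) - (l : ℝ)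

lemma hfun_expand (A : Finset (Fin n)) (l : ℕ) :
    hfun A l = (∑ a ∈ A, e {a}) - (l : ℝ) • e (∅ : Finset (Fin n)) := by
  funext S
  simp only [hfun, Pi.sub_apply, Finset.sum_apply, Pi.smul_apply, e, smul_eq_mul]
  have : ∑ a ∈ A, (if ({a} : Finset (Fin n)) ⊆ S then (1:ℝ) else 0)
      = ((A ∩ S).card : ℝ) := by
    simp only [Finset.singleton_subset_iff]
    rw [Finset.sum_ite_mem]
    simp
  rw [this]
  simp

lemma step (k : ℕ) (f : Finset (Fin n) → ℝ) (hf : f ∈ V (n := n) k)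
    (A : Finset (Fin n)) (l : ℕ) : f * hfun A l ∈ V (n := n) (k + 1) := by
  induction hf using Submodule.span_induction with
  | mem x hx =>
    obtain ⟨T, hT, rfl⟩ := hx
    rw [hfun_expand, mul_sub, Finset.mul_sum, mul_smul_comm]
    refine sub_mem (Submodule.sum_mem _ fun a _ => ?_) (Submodule.smul_mem _ _ ?_)
    · rw [e_mul]
      refine Submodule.subset_span ⟨T ∪ {a}, ?_, rfl⟩
      calc (T ∪ {a}).card ≤ T.card + ({a} : Finset (Fin n)).card := Finset.card_union_le _ _
        _ ≤ k + 1 := by simpa using hT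
    · rw [e_mul, Finset.union_empty]
      exact Submodule.subset_span ⟨T, le_trans hT (Nat.le_succ k), rfl⟩
  | zero => simp only [zero_mul]; exact Submodule.zero_mem _
  | add x y hx hy ihx ihy => rw [add_mul]; exact Submodule.add_mem _ ihx ihy
  | smul c x hx ihx =>
    have : (c • x) * hfun A l = c • (x * hfun A l) := by
      funext S; simp [mul_assoc]
    rw [this]; exact Submodule.smul_mem _ _ ihx

lemma prod_mem (A : Finset (Fin n)) (L : Finset ℕ) :
    (∏ l ∈ L, hfun A l) ∈ V (n := n) L.card := by
  induction L using Finset.cons_induction with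
  | empty =>
    have : (∏ l ∈ (∅ : Finset ℕ), hfun A l) = e (∅ : Finset (Fin n)) := by
      funext S; simp [e]
    rw [this]
    exact Submodule.subset_span ⟨∅, by simp, rfl⟩
  | cons a L ha ih =>
    rw [Finset.prod_cons, Finset.card_cons, mul_comm]
    exact step _ _ ih A a

end Stmt18Aux

/-- **Lemma 3.2 (Füredi–Sudakov).** Let `ℒ` be a set of `s` nonnegative integers and
let `A 1, …, A m` and `B 1, …, B m` be subsets of `[n]` such that
(i) `|A i ∩ B j| ∈ ℒ` for every pair `i < j`, and (ii) `|A i ∩ B i| ∉ ℒ` for every `i`.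
Then `m ≤ C(n, s) + C(n, s-1) + ⋯ + C(n, 0)`. -/
theorem stmt_18 (n s m : ℕ) (L : Finset ℕ) (hL : L.card = s)
    (A B : Fin m → Finset (Fin n))
    (hi : ∀ i j : Fin m, i < j → (A i ∩ B j).card ∈ L)
    (hii : ∀ i : Fin m, (A i ∩ B i).card ∉ L) :
    m ≤ ∑ j ∈ Finset.range (s + 1), n.choose j := by
  classical
  open Stmt18Aux in
  -- the polynomial functions
  set g : Fin m → (Finset (Fin n) → ℝ) := fun i => ∏ l ∈ L, Stmt18Aux.hfun (A i) l with hg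
  -- evaluation
  have hgval : ∀ i S, g i S = ∏ l ∈ L, (((A i ∩ S).card : ℝ) - (l : ℝ)) := by
    intro i S
    simp [hg, Stmt18Aux.hfun, Finset.prod_apply]
  have hg_zero : ∀ i j : Fin m, i < j → g i (B j) = 0 := by
    intro i j hij
    rw [hgval]
    exact Finset.prod_eq_zero (hi i j hij) (by simp)
  have hg_ne : ∀ i : Fin m, g i (B i) ≠ 0 := by
    intro i
    rw [hgval]
    refine Finset.prod_ne_zero_iff.mpr fun l hl => ?_
    have : (A i ∩ B i).card ≠ l := fun h => hii i (h ▸ hl)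
    exact sub_ne_zero_of_ne (by exact_mod_cast this)
  -- linear independence
  have hind : LinearIndependent ℝ g := by
    rw [Fintype.linearIndependent_iff]
    intro c hc
    by_contra hcon
    push_neg at hcon
    have hne : (Finset.univ.filter fun i => c i ≠ 0).Nonempty := by
      obtain ⟨i, hi0⟩ := hcon
      exact ⟨i, by simp [hi0]⟩
    set i0 := (Finset.univ.filter fun i => c i ≠ 0).max' hne with hi0def
    have hci0 : c i0 ≠ 0 := by
      have := Finset.max'_mem _ hne
      rw [← hi0def] at this
      simpa using this
    have hval := congrFun hc (B i0)
    rw [Finset.sum_apply] at hval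
    simp only [Pi.smul_apply, smul_eq_mul, Pi.zero_apply] at hval
    rw [Finset.sum_eq_single i0 (fun i _ hne' => ?_) (by simp)] at hval
    · exact hci0 (by simpa [hg_ne i0] using hval)
    · by_cases hci : c i = 0
      · simp [hci]
      · have hle : i ≤ i0 := Finset.le_max' _ i (by simp [hci])
        have : i < i0 := lt_of_le_of_ne hle hne'
        rw [hg_zero i i0 this, mul_zero]
  -- the spanning finset
  set Ts : Finset (Finset (Fin n)) := Finset.univ.filter fun T => T.card ≤ s with hTs
  have hspan : Submodule.span ℝ (Set.range g) ≤
      Submodule.span ℝ ((Ts.image Stmt18Aux.e : Finset (Finset (Fin n) → ℝ)) : Set _) := by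
    rw [Submodule.span_le]
    rintro _ ⟨i, rfl⟩
    have := Stmt18Aux.prod_mem (A i) L
    rw [hL] at this
    refine Submodule.span_mono ?_ this
    rintro _ ⟨T, hT, rfl⟩
    exact Finset.mem_coe.mpr (Finset.mem_image_of_mem _ (by simp [hTs]; exact hT))
  have h1 : m = Module.finrank ℝ (Submodule.span ℝ (Set.range g)) := by
    rw [finrank_span_eq_card hind, Fintype.card_fin]
  have h2 : Module.finrank ℝ (Submodule.span ℝ (Set.range g)) ≤ (Ts.image Stmt18Aux.e).card := by
    refine le_trans (Submodule.finrank_mono hspan) ?_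
    exact finrank_span_finset_le_card _
  have h3 : Ts.card = ∑ j ∈ Finset.range (s + 1), n.choose j := by
    have hunion : Ts = (Finset.range (s + 1)).biUnion
        fun j => Finset.powersetCard j (Finset.univ : Finset (Fin n)) := by
      ext T
      simp [hTs, Finset.mem_powersetCard, Nat.lt_succ_iff, eq_comm]
    rw [hunion, Finset.card_biUnion]
    · refine Finset.sum_congr rfl fun j _ => ?_
      rw [Finset.card_powersetCard, Finset.card_univ, Fintype.card_fin]
    · intro x _ y _ hxy
      refine Finset.disjoint_left.mpr fun T hT hT' => ?_
      rw [Finset.mem_powersetCard] at hT hT'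
      exact hxy (hT.2.symm.trans hT'.2)
  calc m = Module.finrank ℝ (Submodule.span ℝ (Set.range g)) := h1
    _ ≤ (Ts.image Stmt18Aux.e).card := h2
    _ ≤ Ts.card := Finset.card_image_le
    _ = ∑ j ∈ Finset.range (s + 1), n.choose j := h3
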